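/- For natural numbers m ≥ n, for each c ∈ C^× and each k with 0 ≤ k ≤ m-n, the C[x]-linear map ψ^{c,k}: g(m) → g(n) defined by H_m ↦ H_n, X_m ↦ c·x^k·X_n, Y_m ↦ c^{-1}·x^{m-n-k}·Y_n is a morphism of Lie algebras over C[x]. -/
import Mathlib


open Polynomial

/-- The bracket of the family `g(n)` on the free `ℂ[x]`-module with
basis `H = e 0`, `X = e 1`, `Y = e 2`, determined by
`[H,X] = 2X`, `[H,Y] = -2Y`, `[X,Y] = x^n • H`. -/
noncomputable def br (n : ℕ) (a b : Fin 3 → Polynomial ℂ) : Fin 3 → Polynomial ℂ :=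
  ![X ^ n * (a 1 * b 2 - a 2 * b 1),
    2 * (a 0 * b 1 - a 1 * b 0),
    (-2) * (a 0 * b 2 - a 2 * b 0)]

noncomputable def Hv : Fin 3 → Polynomial ℂ := ![1, 0, 0]
noncomputable def Xv : Fin 3 → Polynomial ℂ := ![0, 1, 0]
noncomputable def Yv : Fin 3 → Polynomial ℂ := ![0, 0, 1]

/-- For `m ≥ n`, `c ∈ ℂˣ` and `0 ≤ k ≤ m - n`, the `ℂ[x]`-linear map
`ψ^{c,k} : g(m) → g(n)` determined by `H_m ↦ H_n`, `X_m ↦ c·x^k • X_n`,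
`Y_m ↦ c⁻¹·x^{m-n-k} • Y_n` is a morphism of Lie algebras over `ℂ[x]`. -/
theorem psi_is_morphism (m n : ℕ) (hmn : n ≤ m) (c : ℂ) (hc : c ≠ 0)
    (k : ℕ) (hk : k ≤ m - n)
    (f : (Fin 3 → Polynomial ℂ) →ₗ[Polynomial ℂ] (Fin 3 → Polynomial ℂ))
    (hH : f Hv = Hv)
    (hX : f Xv = (C c * X ^ k) • Xv)
    (hY : f Yv = (C c⁻¹ * X ^ (m - n - k)) • Yv) :
    ∀ a b, f (br m a b) = br n (f a) (f b) := by
  have decomp : ∀ v : Fin 3 → Polynomial ℂ, v = v 0 • Hv + v 1 • Xv + v 2 • Yv := by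
    intro v
    funext i
    fin_cases i <;> simp [Hv, Xv, Yv]
  have fval : ∀ v : Fin 3 → Polynomial ℂ,
      f v = ![v 0, C c * X ^ k * v 1, C c⁻¹ * X ^ (m - n - k) * v 2] := by
    intro v
    conv_lhs => rw [decomp v]
    rw [map_add, map_add, map_smul, map_smul, map_smul, hH, hX, hY]
    funext i
    fin_cases i <;> simp [Hv, Xv, Yv, smul_eq_mul] <;> ring
  have hcc : C c * C c⁻¹ = 1 := by
    rw [← C_mul, mul_inv_cancel₀ hc, C_1]
  have hpow : (X : Polynomial ℂ) ^ n * (X ^ k * X ^ (m - n - k)) = X ^ m := by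
    rw [← pow_add, ← pow_add, Nat.add_sub_cancel' hk, Nat.add_sub_cancel' hmn]
  intro a b
  rw [fval, fval, fval]
  funext i
  fin_cases i <;> simp [br]
  · calc X ^ m * (a 1 * b 2 - a 2 * b 1)
        = (C c * C c⁻¹) * (X ^ n * (X ^ k * X ^ (m - n - k))) * (a 1 * b 2 - a 2 * b 1) := by
          rw [hcc, hpow]; ring
      _ = X ^ n * (C c * X ^ k * a 1 * (C c⁻¹ * X ^ (m - n - k) * b 2) -
            C c⁻¹ * X ^ (m - n - k) * a 2 * (C c * X ^ k * b 1)) := by ring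
  · ring
  · ring
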